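/- For the geometric series kernel K(x,g) = Σ_{k≥0} e^{−ikx}⟨n|g|n⟩^k on S¹ × SU(2), at any point where |⟨n|g|n⟩| < 1 the series converges absolutely and defines a smooth function; the singular support is contained in the set {(x, g) : g stabilizes n and x ≡ −i·log⟨n|g|n⟩ mod 2π}. -/

import Mathlib

/-- The coherent-state matrix element `⟨n|g|n⟩`. -/
noncomputable def cme (v : EuclideanSpace ℂ (Fin 2)) (A : Matrix (Fin 2) (Fin 2) ℂ) : ℂ :=
  inner ℂ v (Matrix.toEuclideanLin A v)

lemma cme_of_eq (v : EuclideanSpace ℂ (Fin 2)) (M : Fin 2 → Fin 2 → ℂ) :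
    cme v (Matrix.of M) = ∑ i, ∑ j, (starRingEnd ℂ) (v i) * (M i j * v j) := by
  simp [cme, Matrix.toEuclideanLin_apply, PiLp.inner_apply, Matrix.mulVec, dotProduct,
    Finset.mul_sum, Matrix.of_apply]
  ring

lemma norm_toEuclideanLin (v : EuclideanSpace ℂ (Fin 2)) (A : Matrix (Fin 2) (Fin 2) ℂ)
    (hA : A ∈ Matrix.unitaryGroup (Fin 2) ℂ) :
    ‖Matrix.toEuclideanLin A v‖ = ‖v‖ := by
  have h1 : star A * A = 1 := (Matrix.mem_unitaryGroup_iff').mp hA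
  have hcomp : Matrix.toEuclideanLin A.conjTranspose (Matrix.toEuclideanLin A v) = v := by
    simp only [Matrix.toEuclideanLin_apply, WithLp.ofLp_toLp, Matrix.mulVec_mulVec,
      show A.conjTranspose * A = 1 from h1, Matrix.one_mulVec, WithLp.toLp_ofLp]
  have key : (inner ℂ (Matrix.toEuclideanLin A v) (Matrix.toEuclideanLin A v) : ℂ) = inner ℂ v v := by
    have h3 : Matrix.toEuclideanLin A
        = LinearMap.adjoint (Matrix.toEuclideanLin A.conjTranspose) := by
      rw [Matrix.toEuclideanLin_conjTranspose_eq_adjoint, LinearMap.adjoint_adjoint]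
    conv_lhs => rw [show (inner ℂ (Matrix.toEuclideanLin A v) (Matrix.toEuclideanLin A v) : ℂ)
      = inner ℂ (LinearMap.adjoint (Matrix.toEuclideanLin A.conjTranspose) v)
          (Matrix.toEuclideanLin A v) by rw [← h3]]
    rw [LinearMap.adjoint_inner_left, hcomp]
  rw [inner_self_eq_norm_sq_to_K, inner_self_eq_norm_sq_to_K] at key
  have : ‖Matrix.toEuclideanLin A v‖ ^ 2 = ‖v‖ ^ 2 := by exact_mod_cast key
  nlinarith [norm_nonneg (Matrix.toEuclideanLin A v), norm_nonneg v]

/-- for the geometric series kernel `K(x,g) = Σ_{k≥0} e^{−ikx}⟨n|g|n⟩^k`,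
at any point with `|⟨n|g|n⟩| < 1` the series converges absolutely, with sum
`1/(1 − e^{−ix}⟨n|g|n⟩)`; and `K` is smooth at any point `(x, g)` outside the set
`{(x,g) : g stabilizes n and x ≡ −i·log⟨n|g|n⟩ mod 2π}` (i.e. `e^{−ix}⟨n|g|n⟩ = 1`). -/
theorem stmt11 (v : EuclideanSpace ℂ (Fin 2)) (hv : ‖v‖ = 1)
    (A : Matrix (Fin 2) (Fin 2) ℂ) (hA : A ∈ Matrix.unitaryGroup (Fin 2) ℂ) (x : ℝ) :
    (‖cme v A‖ < 1 →
      Summable (fun k : ℕ => ‖Complex.exp (-Complex.I * k * x) * (cme v A) ^ k‖) ∧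
      HasSum (fun k : ℕ => Complex.exp (-Complex.I * k * x) * (cme v A) ^ k)
        (1 - Complex.exp (-Complex.I * x) * cme v A)⁻¹) ∧
    (¬ ((∃ θ : ℝ, Matrix.toEuclideanLin A v = Complex.exp (Complex.I * θ) • v) ∧
        Complex.exp (-Complex.I * x) * cme v A = 1) →
      ContDiffAt ℝ (⊤ : ℕ∞)
        (fun p : ℝ × (Fin 2 → Fin 2 → ℂ) =>
          (1 - Complex.exp (-Complex.I * p.1) * cme v (Matrix.of p.2))⁻¹)
        (x, Matrix.of.symm A)) := by
  set z := cme v A with hz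
  have habs1 : ‖Complex.exp (-Complex.I * x)‖ = 1 := by
    simp [Complex.norm_exp]
  have hterm : ∀ k : ℕ, Complex.exp (-Complex.I * k * x) * z ^ k
      = (Complex.exp (-Complex.I * x) * z) ^ k := by
    intro k
    rw [mul_pow, ← Complex.exp_nat_mul]
    ring_nf
  constructor
  · intro hlt
    have hw : ‖Complex.exp (-Complex.I * x) * z‖ < 1 := by
      rw [norm_mul, habs1, one_mul]
      exact hlt
    constructor
    · have heq : (fun k : ℕ => ‖Complex.exp (-Complex.I * k * x) * z ^ k‖)
          = fun k : ℕ => ‖Complex.exp (-Complex.I * x) * z‖ ^ k := by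
        funext k; rw [hterm k, norm_pow]
      rw [heq]
      exact summable_geometric_of_lt_one (norm_nonneg _) hw
    · have hs := hasSum_geometric_of_norm_lt_one hw
      have heq : (fun k : ℕ => Complex.exp (-Complex.I * k * x) * z ^ k)
          = fun k : ℕ => (Complex.exp (-Complex.I * x) * z) ^ k := funext hterm
      rw [heq]
      exact hs
  · intro h
    have hne : Complex.exp (-Complex.I * x) * z ≠ 1 := by
      intro heq
      apply h
      refine ⟨?_, heq⟩
      have habsz : ‖z‖ = 1 := by
        have := congrArg (‖·‖) heq
        rwa [norm_mul, habs1, one_mul, norm_one] at this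
      have hv0 : v ≠ 0 := by intro h0; rw [h0, norm_zero] at hv; norm_num at hv
      have hAv : ‖Matrix.toEuclideanLin A v‖ = 1 := by
        rw [norm_toEuclideanLin v A hA, hv]
      have hAv0 : Matrix.toEuclideanLin A v ≠ 0 := by
        intro h0; rw [h0, norm_zero] at hAv; norm_num at hAv
      have hcs : ‖(inner ℂ v (Matrix.toEuclideanLin A v) : ℂ)‖
          = ‖v‖ * ‖Matrix.toEuclideanLin A v‖ := by
        rw [hv, hAv, one_mul]
        show ‖cme v A‖ = 1
        rw [← hz]
        exact habsz
      obtain ⟨r, hr0, hrv⟩ := (norm_inner_eq_norm_iff hv0 hAv0).mp hcs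
      have hzr : z = r := by
        rw [hz]
        unfold cme
        rw [hrv, inner_smul_right, inner_self_eq_norm_sq_to_K, hv]
        simp
      have habsr : ‖r‖ = 1 := by rw [← hzr]; exact habsz
      refine ⟨r.arg, ?_⟩
      have hre : Complex.exp (Complex.I * (r.arg : ℂ)) = r := by
        rw [mul_comm]
        have h5 := Complex.norm_mul_exp_arg_mul_I r
        rwa [habsr, Complex.ofReal_one, one_mul] at h5
      rw [hrv, hre]
    -- smoothness
    have hg : ContDiff ℝ (⊤ : ℕ∞) (fun p : ℝ × (Fin 2 → Fin 2 → ℂ) =>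
        1 - Complex.exp (-Complex.I * p.1) * cme v (Matrix.of p.2)) := by
      apply contDiff_const.sub
      apply ContDiff.mul
      · have h1 : ContDiff ℝ (⊤ : ℕ∞) (fun p : ℝ × (Fin 2 → Fin 2 → ℂ) =>
            -Complex.I * (p.1 : ℂ)) := by
          apply contDiff_const.mul
          exact Complex.ofRealCLM.contDiff.comp contDiff_fst
        exact h1.cexp
      · have : (fun p : ℝ × (Fin 2 → Fin 2 → ℂ) => cme v (Matrix.of p.2))
            = fun p => ∑ i, ∑ j, (starRingEnd ℂ) (v i) * (p.2 i j * v j) := by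
          funext p; rw [cme_of_eq]
        rw [this]
        apply ContDiff.sum; intro i _
        apply ContDiff.sum; intro j _
        apply contDiff_const.mul
        apply ContDiff.mul _ contDiff_const
        fun_prop
    have hval : (1 : ℂ) - Complex.exp (-Complex.I * x) * cme v (Matrix.of (Matrix.of.symm A)) ≠ 0 := by
      simp only [Equiv.apply_symm_apply]
      rw [← hz]
      exact sub_ne_zero.mpr (Ne.symm hne)
    exact (hg.contDiffAt).inv hval
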